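/- Suppose the Brascamp–Lieb datum (B,c) is feasible and B_j B_j^* = I_{n_j} for all j = 1, …, m. Then det(∑_{j=1}^m c_j B_j^* B_j) ≤ 1. -/

import Mathlib

open MeasureTheory ENNReal Matrix Filter Topology

noncomputable section

/-- The space of `m`-transformations: tuples of linear maps `ℝ^n → ℝ^{n_j}`,
represented as matrices. -/
abbrev MTrans (m n : ℕ) (nd : Fin m → ℕ) := ∀ j : Fin m, Matrix (Fin (nd j)) (Fin n) ℝ

/-- A valid input for the Brascamp–Lieb inequality: each `f j` is measurable and
has positive finite integral. -/
def IsInput {m : ℕ} {nd : Fin m → ℕ} (f : ∀ j : Fin m, (Fin (nd j) → ℝ) → ℝ≥0∞) : Prop :=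
  ∀ j, Measurable (f j) ∧ 0 < ∫⁻ y, f j y ∧ ∫⁻ y, f j y < ⊤

/-- The Brascamp–Lieb ratio `BL(B,c;f)`. -/
def BLratio {m n : ℕ} {nd : Fin m → ℕ} (B : MTrans m n nd) (c : Fin m → ℝ)
    (f : ∀ j : Fin m, (Fin (nd j) → ℝ) → ℝ≥0∞) : ℝ≥0∞ :=
  (∫⁻ x : Fin n → ℝ, ∏ j, f j (B j *ᵥ x) ^ c j) / ∏ j, (∫⁻ y, f j y) ^ c j

/-- The Brascamp–Lieb constant `BL(B,c)`. -/
def BLconst {m n : ℕ} {nd : Fin m → ℕ} (B : MTrans m n nd) (c : Fin m → ℝ) : ℝ≥0∞ :=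
  ⨆ (f : ∀ j : Fin m, (Fin (nd j) → ℝ) → ℝ≥0∞) (_ : IsInput f), BLratio B c f

/-- Membership in `F(c)`: finite BL constant and projection-normalised. -/
def MemF {m n : ℕ} {nd : Fin m → ℕ} (B : MTrans m n nd) (c : Fin m → ℝ) : Prop :=
  BLconst B c < ⊤ ∧ ∀ j, B j * (B j)ᵀ = 1

/-- Membership in `G(c)`: the datum `(B,c)` is geometric. -/
def Geometric {m n : ℕ} {nd : Fin m → ℕ} (B : MTrans m n nd) (c : Fin m → ℝ) : Prop :=
  (∀ j, B j * (B j)ᵀ = 1) ∧ ∑ j, c j • ((B j)ᵀ * B j) = 1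

/-- Equivalence of `m`-transformations: `B̃_j = T_j⁻¹ B_j T` for invertible `T, T_j`. -/
def EquivTrans {m n : ℕ} {nd : Fin m → ℕ} (B Bt : MTrans m n nd) : Prop :=
  ∃ (T : Matrix (Fin n) (Fin n) ℝ) (Tj : ∀ j, Matrix (Fin (nd j)) (Fin (nd j)) ℝ),
    IsUnit T ∧ (∀ j, IsUnit (Tj j)) ∧ ∀ j, Bt j = (Tj j)⁻¹ * B j * T

open scoped ComplexOrder in
/-- The positive semidefinite square root of a positive semidefinite matrix (Mathlib's former
`Matrix.PosSemidef.sqrt`, removed upstream; restated with its old definition). -/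
noncomputable def Matrix.PosSemidef.sqrt {n 𝕜 : Type*} [Fintype n] [RCLike 𝕜] [DecidableEq n]
    {A : Matrix n n 𝕜} (hA : A.PosSemidef) : Matrix n n 𝕜 :=
  hA.1.eigenvectorUnitary.1 * diagonal ((↑) ∘ (√·) ∘ hA.1.eigenvalues) *
  (star hA.1.eigenvectorUnitary : Matrix n n 𝕜)

open Classical in
/-- The map `φ`: `φ(B)_j = (B_j B_j^*)^{-1/2} B_j` (defined where `B_j B_j^*` is
positive definite, and as `B_j` otherwise). -/
def phiMap {m n : ℕ} {nd : Fin m → ℕ} (B : MTrans m n nd) : MTrans m n nd := fun j =>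
  if h : (B j * (B j)ᵀ).PosDef then (h.posSemidef.sqrt)⁻¹ * B j else B j

open Classical in
/-- The map `ψ`: `ψ(B)_j = B_j M^{-1/2}` with `M = ∑ c_j B_j^* B_j` (defined where `M`
is positive definite, and as `B_j` otherwise). -/
def psiMap {m n : ℕ} {nd : Fin m → ℕ} (c : Fin m → ℝ) (B : MTrans m n nd) : MTrans m n nd :=
  fun j =>
    if h : (∑ i, c i • ((B i)ᵀ * B i)).PosDef then B j * (h.posSemidef.sqrt)⁻¹ else B j

/-- The BL scaling map `Φ = φ ∘ ψ`. -/
def PhiMap {m n : ℕ} {nd : Fin m → ℕ} (c : Fin m → ℝ) (B : MTrans m n nd) : MTrans m n nd :=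
  phiMap (psiMap c B)

/-- The operator norm of a matrix, viewed as a linear map between Euclidean spaces. -/
def opNorm {a b : ℕ} (A : Matrix (Fin a) (Fin b) ℝ) : ℝ :=
  ‖LinearMap.toContinuousLinearMap (Matrix.toEuclideanLin A)‖


/-! Dilating every input `f_j` by `r > 0` multiplies the Brascamp–Lieb ratio by
`r ^ (∑ c_j n_j - n)`; testing this on a Gaussian input, whose ratio is positive, shows that a
finite Brascamp–Lieb constant forces the scaling condition `∑ c_j n_j = n`. Since `B_j B_jᵀ = 1`,
the positive semidefinite matrix `M = ∑ c_j B_jᵀ B_j` has trace `∑ c_j n_j = n`, and AM–GM on its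
eigenvalues gives `det M ≤ (tr M / n) ^ n = 1`. -/

open Finset

theorem MeasureTheory.Measure.lintegral_comp_smul_of_pos {E : Type*} [NormedAddCommGroup E]
    [NormedSpace ℝ E] [MeasurableSpace E] [BorelSpace E] [FiniteDimensional ℝ E]
    (μ : Measure E) [μ.IsAddHaarMeasure] (f : E → ℝ≥0∞) {r : ℝ} (hr : 0 < r) :
    ∫⁻ x, f (r • x) ∂μ = ENNReal.ofReal (r ^ (-(Module.finrank ℝ E : ℝ))) * ∫⁻ x, f x ∂μ := by
  rw [Real.rpow_neg hr.le, Real.rpow_natCast, ← abs_of_pos (inv_pos.2 (pow_pos hr _)),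
    ← smul_eq_mul, ← lintegral_smul_measure, ← map_addHaar_smul μ hr.ne']
  exact (lintegral_map_equiv f (Homeomorph.smulOfNeZero r hr.ne').toMeasurableEquiv).symm

theorem lintegral_exp_neg_sum_sq (ι : Type*) [Fintype ι] :
    ∫⁻ y : ι → ℝ, ENNReal.ofReal (Real.exp (-∑ i, y i ^ 2)) =
      ENNReal.ofReal (Real.sqrt Real.pi ^ Fintype.card ι) := by
  have hprod (y : ι → ℝ) : Real.exp (-∑ i, y i ^ 2) = ∏ i, Real.exp (-1 * y i ^ 2) := by
    simp [← Real.exp_sum]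
  have hint : Integrable (fun x : ℝ => Real.exp (-1 * x ^ 2)) :=
    integrable_exp_neg_mul_sq one_pos
  simp_rw [hprod]
  rw [volume_pi, ← ofReal_integral_eq_lintegral_ofReal (Integrable.fintype_prod fun _ => hint)
      (.of_forall fun y => prod_nonneg fun i _ => (Real.exp_pos _).le),
    integral_fintype_prod_eq_pow (fun x : ℝ => Real.exp (-1 * x ^ 2)),
    integral_gaussian, div_one]

theorem Real.prod_le_sum_div_card_pow {ι : Type*} (s : Finset ι) (z : ι → ℝ)
    (hz : ∀ i ∈ s, 0 ≤ z i) : ∏ i ∈ s, z i ≤ ((∑ i ∈ s, z i) / #s) ^ #s := by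
  rcases s.eq_empty_or_nonempty with rfl | hs
  · simp
  have hcard : (0 : ℝ) < #s := by exact_mod_cast hs.card_pos
  have amgm := Real.geom_mean_le_arith_mean s (fun _ => 1) z (fun _ _ => zero_le_one)
    (by simpa using hcard) hz
  simp only [Real.rpow_one, one_mul, sum_const, nsmul_eq_mul, mul_one] at amgm
  calc ∏ i ∈ s, z i = ((∏ i ∈ s, z i) ^ (#s : ℝ)⁻¹) ^ #s := by
        rw [← Real.rpow_natCast, ← Real.rpow_mul (prod_nonneg hz), inv_mul_cancel₀ hcard.ne',
          Real.rpow_one]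
    _ ≤ ((∑ i ∈ s, z i) / #s) ^ #s := by gcongr; exact Real.rpow_nonneg (prod_nonneg hz) _

theorem Matrix.PosSemidef.det_le_trace_div_card_pow {ι : Type*} [Fintype ι] [DecidableEq ι]
    {A : Matrix ι ι ℝ} (hA : A.PosSemidef) :
    A.det ≤ (A.trace / Fintype.card ι) ^ Fintype.card ι := by
  rw [hA.isHermitian.det_eq_prod_eigenvalues, hA.isHermitian.trace_eq_sum_eigenvalues]
  exact Real.prod_le_sum_div_card_pow univ _ fun i _ => hA.eigenvalues_nonneg i

section BrascampLieb

variable {m n : ℕ} {nd : Fin m → ℕ}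

theorem lintegral_comp_smul_fin {k : ℕ} (g : (Fin k → ℝ) → ℝ≥0∞) {r : ℝ} (hr : 0 < r) :
    ∫⁻ y, g (r • y) = ENNReal.ofReal (r ^ (-(k : ℝ))) * ∫⁻ y, g y := by
  simpa using volume.lintegral_comp_smul_of_pos g hr

theorem IsInput.comp_smul {f : ∀ j : Fin m, (Fin (nd j) → ℝ) → ℝ≥0∞} (hf : IsInput f)
    {r : ℝ} (hr : 0 < r) : IsInput fun j y => f j (r • y) := by
  intro j
  obtain ⟨hmeas, hpos, hfin⟩ := hf j
  have hscale : 0 < ENNReal.ofReal (r ^ (-(nd j : ℝ))) :=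
    ENNReal.ofReal_pos.2 (Real.rpow_pos_of_pos hr _)
  refine ⟨hmeas.comp (measurable_const_smul r), ?_, ?_⟩ <;> rw [lintegral_comp_smul_fin _ hr]
  · exact ENNReal.mul_pos hscale.ne' hpos.ne'
  · exact ENNReal.mul_lt_top ENNReal.ofReal_lt_top hfin

theorem BLratio_comp_smul (B : MTrans m n nd) {c : Fin m → ℝ} (hc : ∀ j, 0 ≤ c j)
    (f : ∀ j : Fin m, (Fin (nd j) → ℝ) → ℝ≥0∞) {r : ℝ} (hr : 0 < r) :
    BLratio B c (fun j y => f j (r • y)) =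
      ENNReal.ofReal (r ^ (∑ j, c j * nd j - n)) * BLratio B c f := by
  have hnum : ∫⁻ x, ∏ j, f j (r • (B j *ᵥ x)) ^ c j =
      ENNReal.ofReal (r ^ (-(n : ℝ))) * ∫⁻ x, ∏ j, f j (B j *ᵥ x) ^ c j := by
    simp_rw [← mulVec_smul]
    exact lintegral_comp_smul_fin (fun x => ∏ j, f j (B j *ᵥ x) ^ c j) hr
  have hden : ∏ j, (∫⁻ y, f j (r • y)) ^ c j =
      ENNReal.ofReal (r ^ (-∑ j, c j * nd j)) * ∏ j, (∫⁻ y, f j y) ^ c j := by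
    simp_rw [lintegral_comp_smul_fin _ hr, ENNReal.mul_rpow_of_nonneg _ _ (hc _), prod_mul_distrib,
      ENNReal.ofReal_rpow_of_pos (Real.rpow_pos_of_pos hr _), ← Real.rpow_mul hr.le]
    rw [← ENNReal.ofReal_prod_of_nonneg fun j _ => (Real.rpow_pos_of_pos hr _).le,
      ← Real.rpow_sum_of_pos hr, ← sum_neg_distrib]
    simp_rw [neg_mul, mul_comm]
  unfold BLratio
  have hscale_ne_zero : ENNReal.ofReal (r ^ (-∑ j, c j * nd j)) ≠ 0 :=
    (ENNReal.ofReal_pos.2 (Real.rpow_pos_of_pos hr _)).ne'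
  rw [hnum, hden, ENNReal.mul_div_mul_comm (Or.inl hscale_ne_zero) (Or.inl ENNReal.ofReal_ne_top),
    ← ENNReal.ofReal_div_of_pos (Real.rpow_pos_of_pos hr _), ← Real.rpow_sub hr]
  congr 3
  ring

def gaussianInput (nd : Fin m → ℕ) : ∀ j : Fin m, (Fin (nd j) → ℝ) → ℝ≥0∞ :=
  fun _ y => ENNReal.ofReal (Real.exp (-∑ i, y i ^ 2))

theorem isInput_gaussianInput : IsInput (gaussianInput nd) := by
  intro j
  have hint : ∫⁻ y, gaussianInput nd j y = ENNReal.ofReal (Real.sqrt Real.pi ^ nd j) := by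
    simpa [gaussianInput] using lintegral_exp_neg_sum_sq (Fin (nd j))
  refine ⟨by unfold gaussianInput; fun_prop, ?_, ?_⟩ <;> rw [hint]
  · exact ENNReal.ofReal_pos.2 (pow_pos (Real.sqrt_pos.2 Real.pi_pos) _)
  · exact ENNReal.ofReal_lt_top

theorem BLratio_pos (B : MTrans m n nd) {c : Fin m → ℝ} (hc : ∀ j, 0 ≤ c j)
    {f : ∀ j : Fin m, (Fin (nd j) → ℝ) → ℝ≥0∞} (hf : IsInput f) (hpos : ∀ j y, 0 < f j y) :
    0 < BLratio B c f := by
  have hmeas : Measurable fun x => ∏ j, f j (B j *ᵥ x) ^ c j :=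
    Finset.measurable_prod _ fun j _ =>
      ((hf j).1.comp (continuous_const.matrix_mulVec continuous_id).measurable).pow_const _
  have hnum : 0 < ∫⁻ x, ∏ j, f j (B j *ᵥ x) ^ c j := by
    rw [lintegral_pos_iff_support hmeas, Function.support_eq_univ fun _ =>
      prod_ne_zero_iff.2 fun j _ => (ENNReal.rpow_pos_of_nonneg (hpos j _) (hc j)).ne']
    exact NeZero.pos _
  exact ENNReal.div_pos_iff.2 ⟨hnum.ne', ENNReal.prod_ne_top fun j _ =>
    ENNReal.rpow_ne_top_of_nonneg (hc j) (hf j).2.2.ne⟩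

theorem ENNReal.eq_zero_of_forall_ofReal_rpow_mul_le {e : ℝ} {a C : ℝ≥0∞} (ha : a ≠ 0)
    (hC : C ≠ ⊤) (h : ∀ r : ℝ, 0 < r → ENNReal.ofReal (r ^ e) * a ≤ C) : e = 0 := by
  by_contra he
  have ha_top : a ≠ ⊤ := ne_top_of_le_ne_top hC (by simpa using h 1 one_pos)
  have ha_pos : 0 < a.toReal := ENNReal.toReal_pos ha ha_top
  set x := C.toReal / a.toReal + 1
  have hx : 0 < x := by positivity
  have hbound := ENNReal.toReal_mono hC (h (x ^ e⁻¹) (Real.rpow_pos_of_pos hx _))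
  rw [ENNReal.toReal_mul, Real.rpow_inv_rpow hx.le he, ENNReal.toReal_ofReal hx.le,
    add_mul, div_mul_cancel₀ _ ha_pos.ne'] at hbound
  linarith

theorem sum_mul_eq_of_BLconst_lt_top (B : MTrans m n nd) {c : Fin m → ℝ} (hc : ∀ j, 0 ≤ c j)
    (hB : BLconst B c < ⊤) : ∑ j, c j * nd j = n := by
  have hscale (r : ℝ) (hr : 0 < r) :
      ENNReal.ofReal (r ^ (∑ j, c j * nd j - n)) * BLratio B c (gaussianInput nd) ≤
        BLconst B c := by
    rw [← BLratio_comp_smul B hc _ hr]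
    exact le_iSup₂ (f := fun f (_ : IsInput f) => BLratio B c f) _
      (isInput_gaussianInput.comp_smul hr)
  exact sub_eq_zero.1 <| ENNReal.eq_zero_of_forall_ofReal_rpow_mul_le
    (BLratio_pos B hc isInput_gaussianInput fun _ _ => ENNReal.ofReal_pos.2 (Real.exp_pos _)).ne'
    hB.ne hscale

theorem posSemidef_sum_smul_transpose_mul_self (B : MTrans m n nd) {c : Fin m → ℝ}
    (hc : ∀ j, 0 ≤ c j) : (∑ j, c j • ((B j)ᵀ * B j)).PosSemidef :=
  posSemidef_sum _ fun j _ => by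
    simpa using (posSemidef_conjTranspose_mul_self (B j)).smul (hc j)

theorem trace_sum_smul_transpose_mul_self (B : MTrans m n nd) (c : Fin m → ℝ)
    (hproj : ∀ j, B j * (B j)ᵀ = 1) : (∑ j, c j • ((B j)ᵀ * B j)).trace = ∑ j, c j * nd j := by
  simp [trace_sum, trace_mul_comm _ (B _), hproj]

end BrascampLieb

theorem det_isotropy_le_one {m n : ℕ} {nd : Fin m → ℕ} (c : Fin m → ℝ)
    (hc : ∀ j, 0 < c j) (B : MTrans m n nd) (hB : BLconst B c < ⊤)
    (hproj : ∀ j, B j * (B j)ᵀ = 1) :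
    (∑ j, c j • ((B j)ᵀ * B j)).det ≤ 1 := by
  have hM := posSemidef_sum_smul_transpose_mul_self B fun j => (hc j).le
  have htrace : (∑ j, c j • ((B j)ᵀ * B j)).trace = n :=
    (trace_sum_smul_transpose_mul_self B c hproj).trans
      (sum_mul_eq_of_BLconst_lt_top B (fun j => (hc j).le) hB)
  calc (∑ j, c j • ((B j)ᵀ * B j)).det
      ≤ ((∑ j, c j • ((B j)ᵀ * B j)).trace / n) ^ n := by
        simpa using hM.det_le_trace_div_card_pow
    _ = ((n : ℝ) / n) ^ n := by rw [htrace]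
    _ ≤ 1 := pow_le_one₀ (by positivity) (div_self_le_one _)

end
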